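/- Under assumption A1, let μ ∈ (0, 1], let x ∈ F_p together with (y, s) ∈ F_d satisfy the centering condition Xs = μe. Then for any x' ∈ F_p⁰ and any (y', s') ∈ F_d⁰, every coordinate satisfies x_j ≥ μ x'_j / (n + ⟨x', s'⟩). -/

import Mathlib

open Matrix

noncomputable def enormR {ι : Type*} [Fintype ι] (v : ι → ℝ) : ℝ :=
  Real.sqrt (∑ i, (v i) ^ 2)

noncomputable def opNorm {ι κ : Type*} [Fintype ι] [Fintype κ]
    (M : Matrix ι κ ℝ) : ℝ :=
  sSup {r : ℝ | ∃ v : κ → ℝ, enormR v ≤ 1 ∧ r = enormR (M *ᵥ v)}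

noncomputable def lambdaMin {ι : Type*} [Fintype ι] (M : Matrix ι ι ℝ) : ℝ :=
  sInf {r : ℝ | ∃ v : ι → ℝ, enormR v = 1 ∧ r = v ⬝ᵥ (M *ᵥ v)}

noncomputable def lambdaMax {ι : Type*} [Fintype ι] (M : Matrix ι ι ℝ) : ℝ :=
  sSup {r : ℝ | ∃ v : ι → ℝ, enormR v = 1 ∧ r = v ⬝ᵥ (M *ᵥ v)}

noncomputable def condNum {ι : Type*} [Fintype ι] (M : Matrix ι ι ℝ) : ℝ :=
  lambdaMax M / lambdaMin M

noncomputable def gradProj {m n : ℕ} (B : Matrix (Fin m) (Fin n) ℝ) :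
    Matrix (Fin n) (Fin n) ℝ :=
  1 - Bᵀ * (B * Bᵀ)⁻¹ * B

/-- The proximity measure `δ(x, μ) = ‖P_{AX}((1/μ) X c - e)‖`. -/
noncomputable def prox {m n : ℕ} (A : Matrix (Fin m) (Fin n) ℝ)
    (c x : Fin n → ℝ) (μ : ℝ) : ℝ :=
  enormR (gradProj (A * Matrix.diagonal x) *ᵥ (μ⁻¹ • (Matrix.diagonal x *ᵥ c) - 1))

/-- The proximity measure as `min_{(y,s) ∈ F_d} ‖(1/μ) X s - e‖`. -/
noncomputable def proxMin {m n : ℕ} (A : Matrix (Fin m) (Fin n) ℝ)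
    (c x : Fin n → ℝ) (μ : ℝ) : ℝ :=
  sInf {r : ℝ | ∃ (y : Fin m → ℝ) (s : Fin n → ℝ),
    Aᵀ *ᵥ y + s = c ∧ (∀ i, 0 ≤ s i) ∧
    r = enormR (μ⁻¹ • (Matrix.diagonal x *ᵥ s) - 1)}

/-- The primal normal matrix `A X² Aᵀ` is positive semidefinite. -/
theorem normalPSD {m n : ℕ} (A : Matrix (Fin m) (Fin n) ℝ) (x : Fin n → ℝ) :
    (A * Matrix.diagonal x ^ 2 * Aᵀ).PosSemidef := by
  have h : A * Matrix.diagonal x ^ 2 * Aᵀ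
      = (A * Matrix.diagonal x) * (A * Matrix.diagonal x)ᴴ := by
    rw [Matrix.conjTranspose_mul, Matrix.conjTranspose_eq_transpose_of_trivial,
      Matrix.conjTranspose_eq_transpose_of_trivial, Matrix.diagonal_transpose, pow_two,
      Matrix.mul_assoc, Matrix.mul_assoc, Matrix.mul_assoc]
  rw [h]
  exact Matrix.posSemidef_self_mul_conjTranspose _

/-!
Since `x - x'` lies in the kernel of `A` and `s - s'` in the range of `Aᵀ`, the two differences are
orthogonal, so `⟨x, s'⟩ + ⟨x', s⟩ = ⟨x, s⟩ + ⟨x', s'⟩ = nμ + ⟨x', s'⟩`. As `⟨x, s'⟩ ≥ 0`, the single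
term `x'_j s_j` of `⟨x', s⟩` is at most `nμ + ⟨x', s'⟩ ≤ n + ⟨x', s'⟩`; multiplying by `x_j` and using
`x_j s_j = μ` gives the bound.
-/

namespace Matrix

section Feasibility

variable {R ι κ : Type*} [CommRing R] [Fintype ι] [Fintype κ] {A : Matrix κ ι R} {b : κ → R}
  {c x x' s s' : ι → R} {y y' : κ → R}

theorem dotProduct_sub_sub_eq_zero_of_feasible (hx : A *ᵥ x = b) (hx' : A *ᵥ x' = b)
    (hs : Aᵀ *ᵥ y + s = c) (hs' : Aᵀ *ᵥ y' + s' = c) : (x - x') ⬝ᵥ (s - s') = 0 := by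
  have hrange : s - s' = Aᵀ *ᵥ (y' - y) := by
    rw [mulVec_sub, eq_sub_of_add_eq hs, eq_sub_of_add_eq hs']
    abel
  rw [hrange, dotProduct_mulVec, vecMul_transpose, mulVec_sub, hx, hx', sub_self,
    zero_dotProduct]

theorem dotProduct_add_dotProduct_eq_of_feasible (hx : A *ᵥ x = b) (hx' : A *ᵥ x' = b)
    (hs : Aᵀ *ᵥ y + s = c) (hs' : Aᵀ *ᵥ y' + s' = c) :
    x ⬝ᵥ s' + x' ⬝ᵥ s = x ⬝ᵥ s + x' ⬝ᵥ s' := by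
  have horth := dotProduct_sub_sub_eq_zero_of_feasible hx hx' hs hs'
  rw [sub_dotProduct, dotProduct_sub, dotProduct_sub] at horth
  linear_combination -horth

end Feasibility

theorem mul_le_dotProduct_of_nonneg {R ι : Type*} [Semiring R] [PartialOrder R]
    [IsOrderedRing R] [Fintype ι] {v w : ι → R} (hv : 0 ≤ v) (hw : 0 ≤ w) (i : ι) :
    v i * w i ≤ v ⬝ᵥ w :=
  Finset.single_le_sum (fun j _ => mul_nonneg (hv j) (hw j)) (Finset.mem_univ i)

theorem dotProduct_eq_card_nsmul_of_forall_mul_eq {R ι : Type*} [Semiring R] [Fintype ι]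
    {v w : ι → R} {a : R} (h : ∀ i, v i * w i = a) : v ⬝ᵥ w = Fintype.card ι • a := by
  simp only [dotProduct, h, Finset.sum_const, Finset.card_univ]

end Matrix

theorem stmt_5_general {m n : ℕ} (A : Matrix (Fin m) (Fin n) ℝ) (b : Fin m → ℝ) (c : Fin n → ℝ)
    (μ : ℝ) (hμ1 : μ ≤ 1)
    (x : Fin n → ℝ) (y : Fin m → ℝ) (s : Fin n → ℝ)
    (hxfeas : A *ᵥ x = b) (hxnn : ∀ i, 0 ≤ x i)
    (hdfeas : Aᵀ *ᵥ y + s = c) (hsnn : ∀ i, 0 ≤ s i)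
    (hcenter : ∀ j, x j * s j = μ)
    (x' : Fin n → ℝ) (hx'feas : A *ᵥ x' = b) (hx'pos : ∀ i, 0 < x' i)
    (y' : Fin m → ℝ) (s' : Fin n → ℝ)
    (hd'feas : Aᵀ *ᵥ y' + s' = c) (hs'pos : ∀ i, 0 < s' i) :
    ∀ j, μ * x' j / (n + x' ⬝ᵥ s') ≤ x j := by
  intro j
  have hx'nn : 0 ≤ x' := fun i => (hx'pos i).le
  have hs'nn : 0 ≤ s' := fun i => (hs'pos i).le
  have hcross := dotProduct_add_dotProduct_eq_of_feasible hxfeas hx'feas hdfeas hd'feas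
  have hxs : x ⬝ᵥ s = n * μ := by
    simpa using dotProduct_eq_card_nsmul_of_forall_mul_eq hcenter
  have hxs' : 0 ≤ x ⬝ᵥ s' := dotProduct_nonneg_of_nonneg hxnn hs'nn
  have hterm : x' j * s j ≤ x' ⬝ᵥ s := mul_le_dotProduct_of_nonneg hx'nn hsnn j
  have hgap : 0 < x' ⬝ᵥ s' :=
    (mul_pos (hx'pos j) (hs'pos j)).trans_le (mul_le_dotProduct_of_nonneg hx'nn hs'nn j)
  rw [div_le_iff₀ (by positivity)]
  calc μ * x' j = x j * (x' j * s j) := by rw [← hcenter j]; ring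
    _ ≤ x j * (n * μ + x' ⬝ᵥ s') := mul_le_mul_of_nonneg_left (by linarith) (hxnn j)
    _ ≤ x j * (n + x' ⬝ᵥ s') := by
      gcongr
      · exact hxnn j
      · exact mul_le_of_le_one_right n.cast_nonneg hμ1

/-- coordinatewise lower bound for centered primal points. -/
theorem stmt_5 {m n : ℕ} (A : Matrix (Fin m) (Fin n) ℝ) (b : Fin m → ℝ) (c : Fin n → ℝ)
    -- Assumption A1: nonempty primal and dual interiors, full row rank
    (hrank : A.rank = m)
    (hFp0 : ∃ x0 : Fin n → ℝ, A *ᵥ x0 = b ∧ ∀ i, 0 < x0 i)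
    (hFd0 : ∃ (y0 : Fin m → ℝ) (s0 : Fin n → ℝ), Aᵀ *ᵥ y0 + s0 = c ∧ ∀ i, 0 < s0 i)
    (μ : ℝ) (hμ0 : 0 < μ) (hμ1 : μ ≤ 1)
    (x : Fin n → ℝ) (y : Fin m → ℝ) (s : Fin n → ℝ)
    (hxfeas : A *ᵥ x = b) (hxnn : ∀ i, 0 ≤ x i)
    (hdfeas : Aᵀ *ᵥ y + s = c) (hsnn : ∀ i, 0 ≤ s i)
    (hcenter : ∀ j, x j * s j = μ)
    (x' : Fin n → ℝ) (hx'feas : A *ᵥ x' = b) (hx'pos : ∀ i, 0 < x' i)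
    (y' : Fin m → ℝ) (s' : Fin n → ℝ)
    (hd'feas : Aᵀ *ᵥ y' + s' = c) (hs'pos : ∀ i, 0 < s' i) :
    ∀ j, μ * x' j / (n + x' ⬝ᵥ s') ≤ x j :=
  stmt_5_general A b c μ hμ1 x y s hxfeas hxnn hdfeas hsnn hcenter x' hx'feas hx'pos y' s' hd'feas
    hs'pos
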